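/- arXiv:1408.1555 — 3 statements merged into one kernel-verified Lean document; each statement's English description precedes it below -/
import Mathlib

section
/- Let a Lie group G act smoothly on a manifold M, let α be a basic differential k-form on M (G-invariant and horizontal), and let p₁, p₂ : U → M be smooth maps from an open subset U of ℝⁿ such that p₂(u) = a(u)·p₁(u) for some smooth function a : U → G. Then p₁*α = p₂*α. -/
open scoped Manifold

noncomputable section

/-- Points of `ℝⁿ`. -/
abbrev Eucl (n : ℕ) : Type := EuclideanSpace ℝ (Fin n)

variable {E : Type*} [NormedAddCommGroup E] [NormedSpace ℝ E]
  {H : Type*} [TopologicalSpace H] (I : ModelWithCorners ℝ E H)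
  (M : Type*) [TopologicalSpace M] [ChartedSpace H M] [IsManifold I (⊤ : ℕ∞) M]

/-- An (ordinary) differential `k`-form on a manifold `M`: an alternating `k`-linear
functional on each tangent space.  (Smoothness is imposed separately via
`IsSmoothForm`.) -/
def MForm (k : ℕ) : Type _ := ∀ x : M, (TangentSpace I x) [⋀^Fin k]→ₗ[ℝ] ℝ

variable {I M}

/-- Pullback of a differential form along a map of manifolds, via the differential. -/
def mpullback {E' : Type*} [NormedAddCommGroup E'] [NormedSpace ℝ E']
    {H' : Type*} [TopologicalSpace H'] {I' : ModelWithCorners ℝ E' H'}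
    {M' : Type*} [TopologicalSpace M'] [ChartedSpace H' M'] {k : ℕ}
    (f : M' → M) (ω : MForm I M k) : MForm I' M' k :=
  fun x => (ω (f x)).compLinearMap (mfderiv I' I f x).toLinearMap

/-- A form is smooth when all of its pullbacks along smooth maps from Euclidean
spaces have smooth coefficients. -/
def IsSmoothForm {k : ℕ} (ω : MForm I M k) : Prop :=
  ∀ (n : ℕ) (p : Eucl n → M), ContMDiff 𝓘(ℝ, Eucl n) I (⊤ : ℕ∞) p →
    ∀ v : Fin k → Eucl n, ContDiff ℝ (⊤ : ℕ∞) fun u => mpullback (I' := 𝓘(ℝ, Eucl n)) p ω u v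

section action

variable {E' : Type*} [NormedAddCommGroup E'] [NormedSpace ℝ E']
  {H' : Type*} [TopologicalSpace H'] {I' : ModelWithCorners ℝ E' H'}
  {G : Type*} [TopologicalSpace G] [ChartedSpace H' G] [Group G] [LieGroup I' (⊤ : ℕ∞) G]
  [MulAction G M]

/-- `v` is tangent to the orbit `G ⬝ x` at `x`: it is in the image of the differential
at the identity of the orbit map `g ↦ g • x`. -/
def TangentToOrbit (I' : ModelWithCorners ℝ E' H') (G : Type*) [TopologicalSpace G]
    [ChartedSpace H' G] [Group G] [MulAction G M] (x : M) (v : TangentSpace I x) : Prop :=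
  ∃ ξ : TangentSpace I' (1 : G), v = mfderiv I' I (fun g : G => g • x) 1 ξ

/-- A form is horizontal when it vanishes whenever one of its arguments is tangent
to an orbit. -/
def Horizontal {k : ℕ} (ω : MForm I M k) : Prop :=
  ∀ (x : M) (v : TangentSpace I x), TangentToOrbit I' G x v →
    ∀ (vs : Fin k → TangentSpace I x) (i : Fin k), vs i = v → ω x vs = 0

/-- A form is invariant when it is preserved by the pullback along each `g • ·`. -/
def Invariant {k : ℕ} (ω : MForm I M k) : Prop :=
  ∀ g : G, mpullback (fun x : M => g • x) ω = ω

/-- A form is basic when it is invariant and horizontal. -/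
def Basic {k : ℕ} (ω : MForm I M k) : Prop :=
  Invariant (G := G) ω ∧ Horizontal (I' := I') (G := G) ω

end action

/-!
Write `g = a u` and `x = p₁ u`. Differentiating `p₂ = a • p₁` splits `dp₂ w` into
`d(g • ·)(dp₁ w)` plus the image of `da w` under the derivative of the orbit map `h ↦ h • x`,
a vector tangent to the orbit through `g • x`. Expanding `α (g • x)` multilinearly, horizontality
kills every term containing such a vector, and invariance identifies the remaining one with
`α x (dp₁ ·)`.
-/

theorem MultilinearMap.map_add_eq_of_vanishes_on {R ι M₁ N : Type*} [CommSemiring R]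
    [AddCommMonoid M₁] [AddCommMonoid N] [Module R M₁] [Module R N] [Fintype ι]
    (f : MultilinearMap R (fun _ : ι => M₁) N) (S : Set M₁)
    (hf : ∀ (v : ι → M₁) (i : ι), v i ∈ S → f v = 0) (v w : ι → M₁) (hw : ∀ i, w i ∈ S) :
    f (v + w) = f v := by
  classical
  -- Expanding multilinearly, every term but `f v` has an argument taken from `w`.
  rw [f.map_add_univ, Finset.sum_eq_single Finset.univ]
  · rw [Finset.piecewise_univ]
  · intro s _ hs
    obtain ⟨i, hi⟩ : ∃ i, i ∉ s := by
      by_contra! hall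
      exact hs (Finset.eq_univ_iff_forall.2 hall)
    exact hf _ i (by rw [Finset.piecewise_eq_of_notMem _ _ _ hi]; exact hw i)
  · exact fun h => absurd (Finset.mem_univ _) h

theorem mfderiv_comp_prodMk_apply
    {E₁ : Type*} [NormedAddCommGroup E₁] [NormedSpace ℝ E₁] {H₁ : Type*} [TopologicalSpace H₁]
    {I₁ : ModelWithCorners ℝ E₁ H₁} {M₁ : Type*} [TopologicalSpace M₁] [ChartedSpace H₁ M₁]
    {E₂ : Type*} [NormedAddCommGroup E₂] [NormedSpace ℝ E₂] {H₂ : Type*} [TopologicalSpace H₂]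
    {I₂ : ModelWithCorners ℝ E₂ H₂} {M₂ : Type*} [TopologicalSpace M₂] [ChartedSpace H₂ M₂]
    {E₃ : Type*} [NormedAddCommGroup E₃] [NormedSpace ℝ E₃] {H₃ : Type*} [TopologicalSpace H₃]
    {I₃ : ModelWithCorners ℝ E₃ H₃} {M₃ : Type*} [TopologicalSpace M₃] [ChartedSpace H₃ M₃]
    {E₀ : Type*} [NormedAddCommGroup E₀] [NormedSpace ℝ E₀] {H₀ : Type*} [TopologicalSpace H₀]
    {I₀ : ModelWithCorners ℝ E₀ H₀} {M₀ : Type*} [TopologicalSpace M₀] [ChartedSpace H₀ M₀]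
    {F : M₁ × M₂ → M₃} {f₁ : M₀ → M₁} {f₂ : M₀ → M₂} {u : M₀}
    (hF : MDifferentiableAt (I₁.prod I₂) I₃ F (f₁ u, f₂ u))
    (hf₁ : MDifferentiableAt I₀ I₁ f₁ u) (hf₂ : MDifferentiableAt I₀ I₂ f₂ u)
    (w : TangentSpace I₀ u) :
    mfderiv I₀ I₃ (fun z => F (f₁ z, f₂ z)) u w =
      mfderiv I₁ I₃ (fun y => F (y, f₂ u)) (f₁ u) (mfderiv I₀ I₁ f₁ u w) +
        mfderiv I₂ I₃ (fun y => F (f₁ u, y)) (f₂ u) (mfderiv I₀ I₂ f₂ u w) := by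
  rw [show (fun z => F (f₁ z, f₂ z)) = F ∘ fun z => (f₁ z, f₂ z) from rfl,
    mfderiv_comp_apply u hF (hf₁.prodMk hf₂), mfderiv_prod_eq_add_apply hF,
    mfderiv_prodMk hf₁ hf₂]
  rfl

section action

variable {E' : Type*} [NormedAddCommGroup E'] [NormedSpace ℝ E']
  {H' : Type*} [TopologicalSpace H'] {I' : ModelWithCorners ℝ E' H'}
  {G : Type*} [Group G] [MulAction G M]

omit [IsManifold I (⊤ : ℕ∞) M] in
/-- `h ↦ h • x` is the orbit map of `g • x` precomposed with right multiplication by `g⁻¹`. -/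
theorem tangentToOrbit_mfderiv_orbitMap [TopologicalSpace G] [ChartedSpace H' G]
    [LieGroup I' (⊤ : ℕ∞) G] {g : G} {x : M}
    (horb : MDifferentiableAt I' I (fun h : G => h • (g • x)) 1) (η : TangentSpace I' g) :
    TangentToOrbit I' G (g • x) (mfderiv I' I (fun h : G => h • x) g η) := by
  have hfactor : (fun h : G => h • x) = (fun h : G => h • (g • x)) ∘ fun h => h * g⁻¹ := by
    funext h
    simp [smul_smul]
  have hmul : MDifferentiableAt I' I' (fun h : G => h * g⁻¹) g :=
    (contMDiff_mul_right (n := ((⊤ : ℕ∞) : WithTop ℕ∞))).contMDiffAt.mdifferentiableAt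
      (by simp)
  rw [← mul_inv_cancel g] at horb
  have hchain : mfderiv I' I (fun h : G => h • x) g =
      (mfderiv I' I (fun h : G => h • (g • x)) (g * g⁻¹)).comp
        (mfderiv I' I' (fun h : G => h * g⁻¹) g) := by
    rw [hfactor, mfderiv_comp g horb hmul]
  rw [hchain, mul_inv_cancel]
  exact ⟨_, rfl⟩

variable {k : ℕ} {α : MForm I M k}

omit [IsManifold I (⊤ : ℕ∞) M] in
theorem Invariant.apply_mfderiv_smul (hα : Invariant (G := G) α) (g : G) {x : M}
    (v : Fin k → TangentSpace I x) :
    α (g • x) (fun i => mfderiv I I (fun y : M => g • y) x (v i)) = α x v :=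
  congrArg (fun β : MForm I M k => β x v) (hα g)

omit [IsManifold I (⊤ : ℕ∞) M] in
theorem Horizontal.apply_add_of_tangentToOrbit [TopologicalSpace G] [ChartedSpace H' G]
    (hα : Horizontal (I' := I') (G := G) α) {x : M}
    (v w : Fin k → TangentSpace I x) (hw : ∀ i, TangentToOrbit I' G x (w i)) :
    α x (v + w) = α x v :=
  (α x).toMultilinearMap.map_add_eq_of_vanishes_on {v | TangentToOrbit I' G x v}
    (fun vs i hi => hα x (vs i) hi vs i rfl) v w hw

end action

theorem pullbacks_eq_of_smoothly_related_general
    {E' : Type*} [NormedAddCommGroup E'] [NormedSpace ℝ E']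
    {H' : Type*} [TopologicalSpace H'] {I' : ModelWithCorners ℝ E' H'}
    {G : Type*} [TopologicalSpace G] [ChartedSpace H' G] [Group G] [LieGroup I' (⊤ : ℕ∞) G]
    [MulAction G M]
    (hact : ContMDiff (I'.prod I) I (⊤ : ℕ∞) fun p : G × M => p.1 • p.2)
    {k : ℕ} (α : MForm I M k)
    (hbasic : Basic (I' := I') (G := G) α)
    {n : ℕ} {U : Set (Eucl n)} (hU : IsOpen U)
    (p₁ p₂ : Eucl n → M) (hp₁ : ContMDiffOn 𝓘(ℝ, Eucl n) I (⊤ : ℕ∞) p₁ U)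
    (a : Eucl n → G) (ha : ContMDiffOn 𝓘(ℝ, Eucl n) I' (⊤ : ℕ∞) a U)
    (haction : ∀ u ∈ U, p₂ u = a u • p₁ u) :
    ∀ u ∈ U,
      mpullback (I' := 𝓘(ℝ, Eucl n)) p₁ α u = mpullback (I' := 𝓘(ℝ, Eucl n)) p₂ α u := by
  intro u hu
  obtain ⟨hinv, hhor⟩ := hbasic
  set g := a u
  set x := p₁ u
  have hact_diff : ∀ q, MDifferentiableAt (I'.prod I) I (fun p : G × M => p.1 • p.2) q :=
    fun q => (hact q).mdifferentiableAt (by simp)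
  have hau : MDifferentiableAt 𝓘(ℝ, Eucl n) I' a u :=
    (ha.contMDiffAt (hU.mem_nhds hu)).mdifferentiableAt (by simp)
  have hp₁u : MDifferentiableAt 𝓘(ℝ, Eucl n) I p₁ u :=
    (hp₁.contMDiffAt (hU.mem_nhds hu)).mdifferentiableAt (by simp)
  have horb : MDifferentiableAt I' I (fun h : G => h • (g • x)) 1 :=
    (hact_diff _).comp _ (mdifferentiableAt_id.prodMk mdifferentiableAt_const)
  have hdp₂ : ∀ w, mfderiv 𝓘(ℝ, Eucl n) I p₂ u w =
      mfderiv I I (fun y : M => g • y) x (mfderiv 𝓘(ℝ, Eucl n) I p₁ u w) +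
        mfderiv I' I (fun h : G => h • x) g (mfderiv 𝓘(ℝ, Eucl n) I' a u w) := by
    intro w
    rw [(Filter.eventuallyEq_of_mem (hU.mem_nhds hu) haction).mfderiv_eq, add_comm]
    exact mfderiv_comp_prodMk_apply (F := fun p : G × M => p.1 • p.2) (hact_diff _) hau hp₁u w
  ext v
  simp only [mpullback, AlternatingMap.compLinearMap_apply, ContinuousLinearMap.coe_coe]
  rw [haction u hu]
  calc α x (fun i => mfderiv 𝓘(ℝ, Eucl n) I p₁ u (v i))
      = α (g • x) (fun i => mfderiv I I (fun y : M => g • y) x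
          (mfderiv 𝓘(ℝ, Eucl n) I p₁ u (v i))) := (hinv.apply_mfderiv_smul g _).symm
    _ = α (g • x) ((fun i => mfderiv I I (fun y : M => g • y) x
          (mfderiv 𝓘(ℝ, Eucl n) I p₁ u (v i))) +
          fun i => mfderiv I' I (fun h : G => h • x) g (mfderiv 𝓘(ℝ, Eucl n) I' a u (v i))) :=
        (hhor.apply_add_of_tangentToOrbit _ _ fun i =>
          tangentToOrbit_mfderiv_orbitMap horb _).symm
    _ = α (g • x) (fun i => mfderiv 𝓘(ℝ, Eucl n) I p₂ u (v i)) :=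
        congrArg _ (funext fun i => (hdp₂ (v i)).symm)

/-- Let a Lie group `G` act smoothly on a manifold `M`, let `α` be a
basic `k`-form on `M`, and let `p₁, p₂ : U → M` be smooth maps on an open `U ⊆ ℝⁿ`
with `p₂ u = a u • p₁ u` for a smooth `a : U → G`.  Then `p₁* α = p₂* α` on `U`. -/
theorem pullbacks_eq_of_smoothly_related
    {E' : Type*} [NormedAddCommGroup E'] [NormedSpace ℝ E']
    {H' : Type*} [TopologicalSpace H'] {I' : ModelWithCorners ℝ E' H'}
    {G : Type*} [TopologicalSpace G] [ChartedSpace H' G] [Group G] [LieGroup I' (⊤ : ℕ∞) G]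
    [MulAction G M]
    (hact : ContMDiff (I'.prod I) I (⊤ : ℕ∞) fun p : G × M => p.1 • p.2)
    {k : ℕ} (α : MForm I M k) (hsm : IsSmoothForm α)
    (hbasic : Basic (I' := I') (G := G) α)
    {n : ℕ} {U : Set (Eucl n)} (hU : IsOpen U)
    (p₁ p₂ : Eucl n → M) (hp₁ : ContMDiffOn 𝓘(ℝ, Eucl n) I (⊤ : ℕ∞) p₁ U)
    (hp₂ : ContMDiffOn 𝓘(ℝ, Eucl n) I (⊤ : ℕ∞) p₂ U)
    (a : Eucl n → G) (ha : ContMDiffOn 𝓘(ℝ, Eucl n) I' (⊤ : ℕ∞) a U)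
    (haction : ∀ u ∈ U, p₂ u = a u • p₁ u) :
    ∀ u ∈ U,
      mpullback (I' := 𝓘(ℝ, Eucl n)) p₁ α u = mpullback (I' := 𝓘(ℝ, Eucl n)) p₂ α u :=
  pullbacks_eq_of_smoothly_related_general hact α hbasic hU p₁ p₂ hp₁ a ha haction
end
end

section
/- Let a finite group G act smoothly on a manifold M and let π : M → M/G be the quotient map. If α is a G-invariant differential k-form on M, and p₁, p₂ : U → M are smooth maps from an open subset U ⊆ ℝⁿ with π ∘ p₁ = π ∘ p₂, then p₁*α = p₂*α on U. -/
/-! If `g • p₁ = p₂` on an open set, the two pullbacks agree there by the chain rule and the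
`G`-invariance of `α`. The finitely many loci `{g • p₁ = p₂}` cover `U`, so by Baire's theorem
the points of a locus lying in the interior of its closure are dense in `U`. As `M` need not be
Hausdorff these loci need not be closed, but injectivity of charts shows that such a point has a
whole neighbourhood inside its locus. Finally the locus where the pullbacks agree is closed, as
`α` is smooth. Smoothness of `α` is only tested on globally defined maps, so near the point of
interest `pᵢ` is first replaced by `pᵢ ∘ ψ`, with `ψ` a bump-function retraction onto a ball
inside `U`. -/

open scoped Manifold

noncomputable section

variable {E : Type*} [NormedAddCommGroup E] [NormedSpace ℝ E]
  {H : Type*} [TopologicalSpace H] (I : ModelWithCorners ℝ E H)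
  (M : Type*) [TopologicalSpace M] [ChartedSpace H M] [IsManifold I (⊤ : ℕ∞) M]

variable {I M}

open Set Topology

theorem subset_closure_iUnion_inter_interior_closure {X ι : Type*} [TopologicalSpace X]
    [BaireSpace X] [Countable ι] {C : ι → Set X} {V : Set X} (hV : IsOpen V)
    (hcover : V ⊆ ⋃ i, C i) : V ⊆ closure (⋃ i, C i ∩ interior (closure (C i))) := by
  intro x hx
  rw [mem_closure_iff]
  intro W hW hxW
  obtain ⟨i, hi⟩ : ∃ i, (interior (closure (W ∩ V ∩ C i))).Nonempty := by
    by_contra! h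
    refine not_isMeagre_of_isOpen (hW.inter hV) ⟨x, hxW, hx⟩ ?_
    refine (isMeagre_iUnion fun i => IsNowhereDense.isMeagre (h i)).mono fun y hy => ?_
    obtain ⟨j, hj⟩ := mem_iUnion.1 (hcover hy.2)
    exact mem_iUnion.2 ⟨j, hy, hj⟩
  obtain ⟨z, hzI, ⟨hzW, -⟩, hzC⟩ :=
    mem_closure_iff.1 (interior_subset hi.some_mem) _ isOpen_interior hi.some_mem
  exact ⟨z, hzW, mem_iUnion.2 ⟨i, hzC, interior_mono (closure_mono inter_subset_right) hzI⟩⟩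

theorem eventuallyEq_of_mem_interior_closure_setOf_eq {X M : Type*} (H : Type*)
    [TopologicalSpace X] [TopologicalSpace H] [T2Space H] [TopologicalSpace M] [ChartedSpace H M]
    {f g : X → M}
    (hf : Continuous f) (hg : Continuous g) {x : X}
    (hx : x ∈ interior (closure {y | f y = g y})) (hfg : f x = g x) : f =ᶠ[𝓝 x] g := by
  set c := chartAt H (f x)
  set N := interior (closure {y | f y = g y}) ∩ f ⁻¹' c.source ∩ g ⁻¹' c.source
  have hN : IsOpen N :=
    (isOpen_interior.inter (c.open_source.preimage hf)).inter (c.open_source.preimage hg)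
  have hxN : x ∈ N :=
    ⟨⟨hx, mem_chart_source H (f x)⟩, mem_preimage.2 (hfg ▸ mem_chart_source H (f x))⟩
  have hchart : EqOn (c ∘ f) (c ∘ g) N :=
    EqOn.of_subset_closure (s := N ∩ {y | f y = g y}) (fun y hy => congrArg c hy.2)
      (c.continuousOn.comp hf.continuousOn fun y hy => hy.1.2)
      (c.continuousOn.comp hg.continuousOn fun y hy => hy.2) inter_subset_left
      fun y hy => hN.inter_closure ⟨hy, interior_subset hy.1.1⟩
  filter_upwards [hN.mem_nhds hxN] with y hy
  exact c.injOn hy.1.2 hy.2 (hchart hy)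

theorem exists_contDiff_forall_mem_eventuallyEq_id {F : Type*} [NormedAddCommGroup F]
    [NormedSpace ℝ F] [HasContDiffBump F] {U : Set F} (hU : IsOpen U) {x : F} (hx : x ∈ U) :
    ∃ ψ : F → F, ContDiff ℝ (⊤ : ℕ∞) ψ ∧ (∀ y, ψ y ∈ U) ∧ ψ =ᶠ[𝓝 x] id := by
  obtain ⟨r, hr, hrU⟩ := Metric.isOpen_iff.1 hU x hx
  let f : ContDiffBump x := ⟨r / 2, r, half_pos hr, half_lt_self hr⟩
  refine ⟨fun y => x + f y • (y - x),
    contDiff_const.add (f.contDiff.smul (contDiff_id.sub contDiff_const)), fun y => hrU ?_, ?_⟩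
  · rw [Metric.mem_ball, dist_eq_norm, add_sub_cancel_left, norm_smul,
      Real.norm_of_nonneg f.nonneg]
    by_cases hy : y ∈ Metric.ball x r
    · calc f y * ‖y - x‖ ≤ ‖y - x‖ := mul_le_of_le_one_left (norm_nonneg _) f.le_one
        _ < r := mem_ball_iff_norm.1 hy
    · rw [← f.support_eq, Function.notMem_support] at hy
      simpa [hy] using hr
  · filter_upwards [Metric.closedBall_mem_nhds x (half_pos hr)] with y hy
    simp [f.one_of_mem_closedBall hy]

section Manifold

variable {E₁ E₂ E₃ : Type*} [NormedAddCommGroup E₁] [NormedSpace ℝ E₁]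
  [NormedAddCommGroup E₂] [NormedSpace ℝ E₂] [NormedAddCommGroup E₃] [NormedSpace ℝ E₃]
  {H₁ H₂ H₃ : Type*} [TopologicalSpace H₁] [TopologicalSpace H₂] [TopologicalSpace H₃]
  {I₁ : ModelWithCorners ℝ E₁ H₁} {I₂ : ModelWithCorners ℝ E₂ H₂} {I₃ : ModelWithCorners ℝ E₃ H₃}
  {M₁ M₂ M₃ : Type*} [TopologicalSpace M₁] [ChartedSpace H₁ M₁]
  [TopologicalSpace M₂] [ChartedSpace H₂ M₂] [TopologicalSpace M₃] [ChartedSpace H₃ M₃] {k : ℕ}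

theorem ContMDiffOn.exists_contMDiff_eventuallyEq {F : Type*} [NormedAddCommGroup F]
    [NormedSpace ℝ F] [HasContDiffBump F] {m : ℕ∞} {p : F → M₂} {U : Set F}
    (hp : ContMDiffOn 𝓘(ℝ, F) I₂ m p U) (hU : IsOpen U) {x : F} (hx : x ∈ U) :
    ∃ q : F → M₂, ContMDiff 𝓘(ℝ, F) I₂ m q ∧ q =ᶠ[𝓝 x] p := by
  obtain ⟨ψ, hψ, hψU, hψx⟩ := exists_contDiff_forall_mem_eventuallyEq_id hU hx
  refine ⟨p ∘ ψ, fun y => ((hp _ (hψU y)).contMDiffAt (hU.mem_nhds (hψU y))).comp y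
    ((hψ.of_le (by exact_mod_cast le_top)).contMDiff y), ?_⟩
  filter_upwards [hψx] with y hy
  simp [hy]

theorem Filter.EventuallyEq.mpullback_eq {f g : M₁ → M₂} {x : M₁} (h : f =ᶠ[𝓝 x] g)
    (ω : MForm I₂ M₂ k) : mpullback (I' := I₁) f ω x = mpullback g ω x := by
  simp only [mpullback, h.mfderiv_eq]
  rw [h.eq_of_nhds]

theorem mpullback_comp_apply {f : M₂ → M₃} {g : M₁ → M₂} {x : M₁}
    (hf : MDifferentiableAt I₂ I₃ f (g x)) (hg : MDifferentiableAt I₁ I₂ g x)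
    (ω : MForm I₃ M₃ k) :
    mpullback (I' := I₁) (f ∘ g) ω x = mpullback g (mpullback (I' := I₂) f ω) x := by
  simp only [mpullback, mfderiv_comp x hf hg]
  rfl

theorem IsSmoothForm.isClosed_setOf_mpullback_eq {ω : MForm I₂ M₂ k}
    (hω : IsSmoothForm ω) {n : ℕ} {p q : Eucl n → M₂}
    (hp : ContMDiff 𝓘(ℝ, Eucl n) I₂ (⊤ : ℕ∞) p) (hq : ContMDiff 𝓘(ℝ, Eucl n) I₂ (⊤ : ℕ∞) q) :
    IsClosed {u | mpullback (I' := 𝓘(ℝ, Eucl n)) p ω u = mpullback q ω u} := by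
  have hset : {u | mpullback (I' := 𝓘(ℝ, Eucl n)) p ω u = mpullback q ω u} =
      ⋂ v : Fin k → Eucl n, {u | mpullback (I' := 𝓘(ℝ, Eucl n)) p ω u v = mpullback q ω u v} :=
    Set.ext fun u => by rw [mem_iInter]; exact AlternatingMap.ext_iff
  rw [hset]
  exact isClosed_iInter fun v => isClosed_eq (hω n p hp v).continuous (hω n q hq v).continuous

end Manifold

/-- Let a finite group `G` act smoothly on a manifold `M` and let
`π : M → M/G` be the quotient map.  If `α` is a `G`-invariant differential `k`-form on
`M` and `p₁, p₂ : U → M` are smooth maps from an open `U ⊆ ℝⁿ` with `π ∘ p₁ = π ∘ p₂`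
(i.e. for every `u ∈ U` some `g ∈ G` has `g • p₁ u = p₂ u`), then `p₁* α = p₂* α`
on `U`. -/
theorem pullbacks_eq_of_finite_group_orbit_equal
    (G : Type*) [Group G] [Finite G] [MulAction G M]
    (hact : ∀ g : G, ContMDiff I I (⊤ : ℕ∞) fun x : M => g • x)
    {k : ℕ} (α : MForm I M k) (hsm : IsSmoothForm α)
    (hinv : ∀ g : G, mpullback (fun x : M => g • x) α = α)
    {n : ℕ} {U : Set (Eucl n)} (hU : IsOpen U)
    (p₁ p₂ : Eucl n → M) (hp₁ : ContMDiffOn 𝓘(ℝ, Eucl n) I (⊤ : ℕ∞) p₁ U)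
    (hp₂ : ContMDiffOn 𝓘(ℝ, Eucl n) I (⊤ : ℕ∞) p₂ U)
    (horb : ∀ u ∈ U, ∃ g : G, g • p₁ u = p₂ u) :
    ∀ u ∈ U,
      mpullback (I' := 𝓘(ℝ, Eucl n)) p₁ α u = mpullback (I' := 𝓘(ℝ, Eucl n)) p₂ α u := by
  intro u₀ hu₀
  have : T2Space H := I.isClosedEmbedding.toIsEmbedding.t2Space
  obtain ⟨q₁, hq₁, hqp₁⟩ := hp₁.exists_contMDiff_eventuallyEq hU hu₀
  obtain ⟨q₂, hq₂, hqp₂⟩ := hp₂.exists_contMDiff_eventuallyEq hU hu₀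
  obtain ⟨V, hVsub, hV, hu₀V⟩ := mem_nhds_iff.1 ((hqp₁.and hqp₂).and (hU.mem_nhds hu₀))
  have hcover : V ⊆ ⋃ g : G, {u | g • q₁ u = q₂ u} := fun u hu => by
    obtain ⟨⟨hu₁, hu₂⟩, huU⟩ := hVsub hu
    obtain ⟨g, hg⟩ := horb u huU
    exact mem_iUnion.2 ⟨g, by rw [mem_ofPred_eq, hu₁, hu₂, hg]⟩
  have hagree : ⋃ g : G, {u | g • q₁ u = q₂ u} ∩ interior (closure {u | g • q₁ u = q₂ u}) ⊆
      {u | mpullback (I' := 𝓘(ℝ, Eucl n)) q₁ α u = mpullback q₂ α u} := by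
    refine iUnion_subset fun g z ⟨hz, hzI⟩ => ?_
    have hloc : (fun x : M => g • x) ∘ q₁ =ᶠ[𝓝 z] q₂ :=
      eventuallyEq_of_mem_interior_closure_setOf_eq H
        ((hact g).continuous.comp hq₁.continuous) hq₂.continuous hzI hz
    calc mpullback q₁ α z = mpullback q₁ (mpullback (I' := I) (fun x : M => g • x) α) z := by
          rw [hinv]
      _ = mpullback ((fun x : M => g • x) ∘ q₁) α z :=
        (mpullback_comp_apply ((hact g).mdifferentiableAt (by simp))
          (hq₁.mdifferentiableAt (by simp)) α).symm
      _ = mpullback q₂ α z := hloc.mpullback_eq α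
  have hu₀q : mpullback (I' := 𝓘(ℝ, Eucl n)) q₁ α u₀ = mpullback q₂ α u₀ :=
    (hsm.isClosed_setOf_mpullback_eq hq₁ hq₂).closure_subset_iff.2 hagree
      (subset_closure_iUnion_inter_interior_closure hV hcover hu₀V)
  rw [hqp₁.symm.mpullback_eq, hqp₂.symm.mpullback_eq, hu₀q]
end
end

section
/- Let G be a compact connected Lie group acting orthogonally and linearly on V = ℝᴺ. Let γ₁, γ₂ : ℝ → V be smooth curves with γ₁(0) = γ₂(0) = 0, and suppose for every t ∈ ℝ there exists g_t ∈ G (not necessarily depending continuously on t) with γ₂(t) = g_t · γ₁(t). Let ξ₁ = γ₁'(0) and ξ₂ = γ₂'(0). Then for every horizontal differential form α on V (with respect to the G-action), (ξ₂ − ξ₁) ⌟ α|₀ = 0. -/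
/-!
The image `H` of `G` is a compact connected group of matrices, and its Lie algebra
`𝔥 = {η | exp (t η) ∈ H for all t}` is a linear subspace on whose complement no small `y ≠ 0`
has `exp y ∈ H`; by the inverse function theorem for `(x, y) ↦ exp x * exp y`, `exp 𝔥` therefore
covers a neighbourhood of `1` in `H`. Since `H` is connected, every `g ∈ H` then satisfies
`g - 1 ∈ span {η c | η ∈ 𝔥}`, so `γ₂ t - γ₁ t = (g_t - 1) γ₁ t` lies, for every `t`, in the span
of the vertical vectors `η x`, and so does the derivative `ξ₂ - ξ₁` of this curve. Finally a
horizontal form vanishes at `s x` on `η (s x) = s • η x`, hence at `0` on `η x` as `s → 0`.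
-/

open NormedSpace Filter Topology Asymptotics
open scoped Pointwise

theorem HasFDerivAt.tendsto_smul_sub {E F ι : Type*} [NormedAddCommGroup E] [NormedSpace ℝ E]
    [NormedAddCommGroup F] [NormedSpace ℝ F] {f : E → F} {L : E →L[ℝ] F} {a : E}
    (hf : HasFDerivAt f L a) {l : Filter ι} {c : ι → ℝ} {h : ι → E} {x : E}
    (hh : Tendsto h l (𝓝 a)) (hlim : Tendsto (fun i => c i • (h i - a)) l (𝓝 x)) :
    Tendsto (fun i => c i • (f (h i) - f a)) l (𝓝 (L x)) := by
  have hrem : Tendsto (fun i => c i • (f (h i) - f a - L (h i - a))) l (𝓝 0) := by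
    have hlo := (isBigO_refl c l).smul_isLittleO (hf.isLittleO.comp_tendsto hh)
    simpa [isLittleO_one_iff] using hlo.trans_isBigO (hlim.isBigO_one ℝ)
  have hlin : Tendsto (fun i => L (c i • (h i - a))) l (𝓝 (L x)) :=
    (L.continuous.tendsto x).comp hlim
  simpa [smul_sub] using hrem.add hlin

theorem HasDerivAt.mem_of_forall_mem {E : Type*} [NormedAddCommGroup E] [NormedSpace ℝ E]
    {Z : Submodule ℝ E} (hZ : IsClosed (Z : Set E)) {γ : ℝ → E} {v : E} {t₀ : ℝ}
    (hγ : HasDerivAt γ v t₀) (hmem : ∀ t, γ t ∈ Z) : v ∈ Z :=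
  hZ.mem_of_tendsto (hasDerivAt_iff_tendsto_slope.mp hγ) <| Eventually.of_forall fun t => by
    rw [slope_def_module]; exact Z.smul_mem _ (Z.sub_mem (hmem t) (hmem t₀))

theorem tendsto_natFloor_div_mul {ι : Type*} {l : Filter ι} {r : ι → ℝ}
    (hr : Tendsto r l (𝓝 0)) (hpos : ∀ᶠ i in l, 0 < r i) {t : ℝ} (ht : 0 ≤ t) :
    Tendsto (fun i => ⌊t / r i⌋₊ * r i) l (𝓝 t) := by
  have hlow : Tendsto (fun i => t - r i) l (𝓝 t) := by simpa using tendsto_const_nhds.sub hr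
  refine tendsto_of_tendsto_of_tendsto_of_le_of_le' hlow tendsto_const_nhds ?_ ?_
  · filter_upwards [hpos] with i hi
    have := (div_lt_iff₀ hi).1 (Nat.lt_floor_add_one (t / r i))
    linarith
  · filter_upwards [hpos] with i hi
    exact (le_div_iff₀ hi).1 (Nat.floor_le (div_nonneg ht hi.le))

theorem apply_zero_update_eq_zero_of_vanishing_along {E F ι : Type*} [NormedAddCommGroup E]
    [NormedSpace ℝ E] [NormedAddCommGroup F] [NormedSpace ℝ F] [DecidableEq ι]
    {α : E → E [⋀^ι]→ₗ[ℝ] F} (hα : ∀ vs, Continuous fun x => α x vs) {T : E →ₗ[ℝ] E}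
    (hT : ∀ x vs i, vs i = T x → α x vs = 0) (vs : ι → E) (i : ι) (y : E) :
    α 0 (Function.update vs i (T y)) = 0 := by
  have hvanish : ∀ s : ℝ, s ≠ 0 → α (s • y) (Function.update vs i (T y)) = 0 := fun s hs => by
    have := hT (s • y) _ i (Function.update_self i (T (s • y)) vs)
    rw [T.map_smul, AlternatingMap.map_update_smul] at this
    exact (smul_eq_zero_iff_right hs).mp this
  have hlim : Tendsto (fun s : ℝ => α (s • y) (Function.update vs i (T y))) (𝓝[≠] 0)
      (𝓝 (α 0 (Function.update vs i (T y)))) := by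
    have hsy : Tendsto (fun s : ℝ => s • y) (𝓝 0) (𝓝 0) := by
      simpa using (tendsto_id (x := 𝓝 (0 : ℝ))).smul_const y
    exact (((hα _).tendsto 0).comp hsy).mono_left nhdsWithin_le_nhds
  exact tendsto_nhds_unique hlim (tendsto_const_nhds.congr'
    (eventually_nhdsWithin_of_forall fun s hs => (hvanish s hs).symm))

section ClosedSubmonoid

variable {𝔸 : Type*} [NormedRing 𝔸] [NormedAlgebra ℝ 𝔸]

def lieAlgebraOf (H : Submonoid 𝔸) : Set 𝔸 := {η | ∀ t : ℝ, exp (t • η) ∈ H}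

variable {H : Submonoid 𝔸}

theorem zero_mem_lieAlgebraOf : (0 : 𝔸) ∈ lieAlgebraOf H :=
  fun _ => by simp

theorem smul_mem_lieAlgebraOf {η : 𝔸} (hη : η ∈ lieAlgebraOf H)
    (c : ℝ) : c • η ∈ lieAlgebraOf H := fun t => by
  simpa [smul_smul] using hη (t * c)

variable [CompleteSpace 𝔸]

-- Mathlib states the algebraic identities for `exp` (e.g. `exp_add_of_commute`) over `ℚ`.
noncomputable local instance : NormedAlgebra ℚ 𝔸 := NormedAlgebra.restrictScalars ℚ ℝ 𝔸

theorem hasStrictFDerivAt_exp_mul_exp :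
    HasStrictFDerivAt (fun p : 𝔸 × 𝔸 => exp p.1 * exp p.2)
      (ContinuousLinearMap.fst ℝ 𝔸 𝔸 + ContinuousLinearMap.snd ℝ 𝔸 𝔸) 0 := by
  have h₁ := (hasStrictFDerivAt_exp_zero (𝕂 := ℝ) (𝔸 := 𝔸)).comp (0 : 𝔸 × 𝔸)
    (ContinuousLinearMap.fst ℝ 𝔸 𝔸).hasStrictFDerivAt
  have h₂ := (hasStrictFDerivAt_exp_zero (𝕂 := ℝ) (𝔸 := 𝔸)).comp (0 : 𝔸 × 𝔸)
    (ContinuousLinearMap.snd ℝ 𝔸 𝔸).hasStrictFDerivAt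
  refine (h₁.mul' h₂).congr_fderiv (ContinuousLinearMap.ext fun p => ?_)
  simp [add_comm]

theorem hasDerivAt_exp_smul_mul_exp_smul (η ζ : 𝔸) :
    HasDerivAt (fun s : ℝ => exp (s • η) * exp (s • ζ)) (η + ζ) 0 := by
  have hline : HasDerivAt (fun s : ℝ => (s • η, s • ζ)) (η, ζ) 0 := by
    simpa using ((hasDerivAt_id (0 : ℝ)).smul_const η).prodMk
      ((hasDerivAt_id (0 : ℝ)).smul_const ζ)
  exact (hasStrictFDerivAt_exp_mul_exp.hasFDerivAt.comp_hasDerivAt_of_eq 0 hline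
    (by ext <;> simp)).congr_deriv (by simp : (ContinuousLinearMap.fst ℝ 𝔸 𝔸 +
      ContinuousLinearMap.snd ℝ 𝔸 𝔸) (η, ζ) = η + ζ)

theorem exp_mem_of_tendsto_natCast_smul_sub_one (hH : IsClosed (H : Set 𝔸)) {h : ℕ → 𝔸}
    (hmem : ∀ n, h n ∈ H) {x : 𝔸}
    (hlim : Tendsto (fun n : ℕ => (n : ℝ) • (h n - 1)) atTop (𝓝 x)) : exp x ∈ H := by
  have hexp : HasStrictFDerivAt (exp : 𝔸 → 𝔸) (ContinuousLinearEquiv.refl ℝ 𝔸 : 𝔸 →L[ℝ] 𝔸) 0 :=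
    hasStrictFDerivAt_exp_zero
  have hh : Tendsto h atTop (𝓝 1) := by
    have h0 : Tendsto (fun n : ℕ => (n : ℝ)⁻¹ • ((n : ℝ) • (h n - 1))) atTop (𝓝 0) := by
      simpa using (tendsto_inv_atTop_nhds_zero_nat (𝕜 := ℝ)).smul hlim
    have : Tendsto (fun n => h n - 1) atTop (𝓝 0) := h0.congr' <| by
      filter_upwards [eventually_ne_atTop 0] with n hn
      rw [inv_smul_smul₀ (Nat.cast_ne_zero.2 hn)]
    simpa using this.add_const 1
  set log := hexp.localInverse exp (ContinuousLinearEquiv.refl ℝ 𝔸) 0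
  have hlog : HasFDerivAt log (ContinuousLinearMap.id ℝ 𝔸) 1 := by
    simpa using hexp.to_localInverse.hasFDerivAt
  have hlog1 : log 1 = 0 := by simpa using hexp.localInverse_apply_image
  have hloglim : Tendsto (fun n : ℕ => (n : ℝ) • log (h n)) atTop (𝓝 x) := by
    simpa [hlog1] using hlog.tendsto_smul_sub hh hlim
  refine hH.mem_of_tendsto ((exp_continuous.tendsto x).comp hloglim) ?_
  filter_upwards [hh.eventually (by simpa using hexp.eventually_right_inverse)] with n hn
  rw [Function.comp_apply, Nat.cast_smul_eq_nsmul, exp_nsmul, hn]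
  exact H.pow_mem (hmem n) n

theorem add_mem_lieAlgebraOf (hH : IsClosed (H : Set 𝔸)) {η ζ : 𝔸}
    (hη : η ∈ lieAlgebraOf H) (hζ : ζ ∈ lieAlgebraOf H) :
    η + ζ ∈ lieAlgebraOf H := by
  intro t
  have hscale : Tendsto (fun n : ℕ => (n : ℝ) • (t / n - 0)) atTop (𝓝 t) :=
    tendsto_const_nhds.congr' <| by
      filter_upwards [eventually_ne_atTop 0] with n hn
      rw [sub_zero, smul_eq_mul, mul_div_cancel₀ t (Nat.cast_ne_zero.2 hn)]
  have hlim := (hasDerivAt_exp_smul_mul_exp_smul η ζ).hasFDerivAt.tendsto_smul_sub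
    (tendsto_const_div_atTop_nhds_zero_nat t) hscale
  exact exp_mem_of_tendsto_natCast_smul_sub_one hH (fun n => H.mul_mem (hη _) (hζ _))
    (by simpa using hlim)

theorem mul_mul_mem_lieAlgebraOf {η : 𝔸} (hη : η ∈ lieAlgebraOf H) {a b : 𝔸}
    (ha : a ∈ H) (hb : b ∈ H) (hab : a * b = 1) (hba : b * a = 1) :
    a * η * b ∈ lieAlgebraOf H := by
  intro t
  have hconj := exp_units_conj (⟨a, b, hab, hba⟩ : 𝔸ˣ) (t • η)
  simp only [Units.inv_mk] at hconj
  rw [← smul_mul_assoc, ← mul_smul_comm, hconj]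
  exact H.mul_mem (H.mul_mem ha (hη t)) hb

def lieAlgebraSubmodule (H : Submonoid 𝔸) (hH : IsClosed (H : Set 𝔸)) : Submodule ℝ 𝔸 where
  carrier := lieAlgebraOf H
  zero_mem' := zero_mem_lieAlgebraOf
  add_mem' := add_mem_lieAlgebraOf hH
  smul_mem' c _ hη := smul_mem_lieAlgebraOf hη c

theorem mem_lieAlgebraOf_of_nonneg (hinv : ∀ a ∈ H, ∃ b ∈ H, a * b = 1 ∧ b * a = 1) {u : 𝔸}
    (hu : ∀ t : ℝ, 0 ≤ t → exp (t • u) ∈ H) : u ∈ lieAlgebraOf H := by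
  intro t
  rcases le_or_gt 0 t with ht | ht
  · exact hu t ht
  obtain ⟨b, hbH, hb, -⟩ := hinv _ (hu (-t) (by linarith))
  have hexp_neg : exp (t • u) * exp ((-t) • u) = 1 := by
    rw [← exp_add_of_commute (((Commute.refl u).smul_left t).smul_right (-t)), ← add_smul,
      add_neg_cancel, zero_smul, exp_zero]
  have : exp (t • u) = b := by
    rw [← one_mul b, ← hexp_neg, mul_assoc, hb, mul_one]
  exact this ▸ hbH

theorem exp_smul_mem_of_tendsto (hH : IsClosed (H : Set 𝔸)) {ι : Type*} {l : Filter ι}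
    [l.NeBot] {z : ι → 𝔸} {u : 𝔸} (hz : Tendsto z l (𝓝 0)) (hz0 : ∀ᶠ i in l, z i ≠ 0)
    (hexp : ∀ᶠ i in l, exp (z i) ∈ H) (hu : Tendsto (fun i => ‖z i‖⁻¹ • z i) l (𝓝 u))
    {t : ℝ} (ht : 0 ≤ t) : exp (t • u) ∈ H := by
  have hm := tendsto_natFloor_div_mul (tendsto_norm_zero.comp hz)
    (hz0.mono fun i => norm_pos_iff.2) ht
  have hlim : Tendsto (fun i => (⌊t / ‖z i‖⌋₊ : ℝ) • z i) l (𝓝 (t • u)) :=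
    (hm.smul hu).congr' <| by
      filter_upwards [hz0] with i hi
      simp only [Function.comp_apply]
      rw [mul_smul, smul_inv_smul₀ (norm_ne_zero_iff.2 hi)]
  refine hH.mem_of_tendsto ((exp_continuous.tendsto _).comp hlim) ?_
  filter_upwards [hexp] with i hi
  rw [Function.comp_apply, Nat.cast_smul_eq_nsmul, exp_nsmul]
  exact H.pow_mem hi _

theorem mul_mem_span_lieAlgebraOf_mul (hinv : ∀ a ∈ H, ∃ b ∈ H, a * b = 1 ∧ b * a = 1)
    {g : 𝔸} (hg : g ∈ H) {m : 𝔸}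
    (hm : m ∈ Submodule.span ℝ (lieAlgebraOf H * Set.univ)) :
    g * m ∈ Submodule.span ℝ (lieAlgebraOf H * Set.univ) := by
  obtain ⟨g', hg', hgg', hg'g⟩ := hinv g hg
  refine (Submodule.span_le (p := (Submodule.span ℝ _).comap (LinearMap.mulLeft ℝ g))).mpr
    ?_ hm
  rintro _ ⟨η, hη, c, -, rfl⟩
  refine Submodule.subset_span ⟨g * η * g', mul_mul_mem_lieAlgebraOf hη hg hg' hgg' hg'g,
    g * c, trivial, ?_⟩
  simp only [LinearMap.mulLeft_apply]
  rw [show g * η * g' * (g * c) = g * η * (g' * g) * c by noncomm_ring, hg'g, mul_one,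
    mul_assoc]

variable [FiniteDimensional ℝ 𝔸]

theorem frequently_eq_zero_of_mem_isCompl (hH : IsClosed (H : Set 𝔸))
    (hinv : ∀ a ∈ H, ∃ b ∈ H, a * b = 1 ∧ b * a = 1) {W' : Submodule ℝ 𝔸}
    (hW' : IsCompl (lieAlgebraSubmodule H hH) W') {z : ℕ → 𝔸} (hzW' : ∀ n, z n ∈ W')
    (hz : Tendsto z atTop (𝓝 0)) (hexp : ∀ᶠ n in atTop, exp (z n) ∈ H) :
    ∃ᶠ n in atTop, z n = 0 := by
  by_contra hz0
  rw [not_frequently] at hz0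
  have hball : ∀ n, ‖z n‖⁻¹ • z n ∈ Metric.closedBall (0 : 𝔸) 1 := fun n => by
    simpa [norm_smul] using inv_mul_le_one_of_le₀ le_rfl (norm_nonneg (z n))
  obtain ⟨u, -, φ, hφ, hlim⟩ := (isCompact_closedBall (0 : 𝔸) 1).tendsto_subseq hball
  have hφ' : map φ atTop ≤ atTop := hφ.tendsto_atTop
  have hnorm : ‖u‖ = 1 := by
    refine tendsto_nhds_unique hlim.norm (tendsto_const_nhds.congr' ?_)
    filter_upwards [hφ.tendsto_atTop.eventually hz0] with n hn
    simp [norm_smul, hn]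
  have huW : u ∈ lieAlgebraSubmodule H hH := mem_lieAlgebraOf_of_nonneg hinv fun t ht =>
    exp_smul_mem_of_tendsto hH (hz.mono_left hφ') (hz0.filter_mono hφ')
      (hexp.filter_mono hφ') (tendsto_map'_iff.mpr hlim) ht
  have huW' : u ∈ W' := W'.closed_of_finiteDimensional.mem_of_tendsto hlim
    (Eventually.of_forall fun n => W'.smul_mem _ (hzW' _))
  simp [Submodule.disjoint_def.mp hW'.disjoint u huW huW'] at hnorm

theorem hasStrictFDerivAt_exp_mul_exp_of_isCompl {W W' : Submodule ℝ 𝔸} (hW : IsCompl W W') :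
    HasStrictFDerivAt (fun p : W × W' => exp (p.1 : 𝔸) * exp (p.2 : 𝔸))
      ((Submodule.prodEquivOfIsCompl W W' hW).toContinuousLinearEquiv : (W × W') →L[ℝ] 𝔸) 0 := by
  have hincl := (W.subtypeL.prodMap W'.subtypeL).hasStrictFDerivAt (x := 0)
  refine (hasStrictFDerivAt_exp_mul_exp.comp 0 hincl).congr_fderiv
    (ContinuousLinearMap.ext fun p => ?_)
  simp [Submodule.coe_prodEquivOfIsCompl']

theorem eventually_exists_exp_eq (hH : IsClosed (H : Set 𝔸))
    (hinv : ∀ a ∈ H, ∃ b ∈ H, a * b = 1 ∧ b * a = 1) :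
    ∀ᶠ a in 𝓝 (1 : 𝔸), a ∈ H → ∃ η ∈ lieAlgebraOf H, exp η = a := by
  -- Near `1`, write `a = exp x * exp y` with `x ∈ 𝔥` and `y` in a complement `W'` of `𝔥`.
  -- If `a ∈ H` then `exp y ∈ H`, and small such `y ≠ 0` cannot exist.
  obtain ⟨W', hW'⟩ := (lieAlgebraSubmodule H hH).exists_isCompl
  have hF := hasStrictFDerivAt_exp_mul_exp_of_isCompl hW'
  set p := hF.localInverse _ _ 0
  have hp : Tendsto p (𝓝 1) (𝓝 0) := by
    have h := hF.localInverse_continuousAt.tendsto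
    rw [hF.localInverse_apply_image] at h
    simpa using h
  have hFp : ∀ᶠ a in 𝓝 (1 : 𝔸), exp ((p a).1 : 𝔸) * exp ((p a).2 : 𝔸) = a := by
    simpa using hF.eventually_right_inverse
  by_contra h
  obtain ⟨a, ha, hbad⟩ := exists_seq_forall_of_frequently (not_eventually.mp h)
  push Not at hbad
  have hexp : ∀ᶠ n in atTop, exp ((p (a n)).2 : 𝔸) ∈ H := by
    filter_upwards [ha.eventually hFp] with n hn
    have hx : exp (-((p (a n)).1 : 𝔸)) ∈ H := by simpa using (p (a n)).1.2 (-1)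
    have hy : exp ((p (a n)).2 : 𝔸) =
        exp (-((p (a n)).1 : 𝔸)) * (exp ((p (a n)).1 : 𝔸) * exp ((p (a n)).2 : 𝔸)) := by
      rw [← mul_assoc, ← exp_add_of_commute (Commute.neg_left rfl), neg_add_cancel, exp_zero,
        one_mul]
    rw [hy, hn]
    exact H.mul_mem hx (hbad n).1
  have hz : Tendsto (fun n => ((p (a n)).2 : 𝔸)) atTop (𝓝 0) := by
    have := ((continuous_subtype_val.comp continuous_snd).tendsto 0).comp (hp.comp ha)
    simpa [Function.comp_def] using this
  obtain ⟨n, hn, hzero⟩ := ((frequently_eq_zero_of_mem_isCompl hH hinv hW'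
    (fun n => (p (a n)).2.2) hz hexp).and_eventually (ha.eventually hFp)).exists
  refine (hbad n).2 _ (p (a n)).1.2 ?_
  rwa [hn, exp_zero, mul_one] at hzero

theorem exp_sub_one_mem_range_mulLeft (η : 𝔸) :
    exp η - 1 ∈ LinearMap.range (LinearMap.mulLeft ℝ η) := by
  have hsum : HasSum (fun n : ℕ => η * (((n + 1).factorial : ℝ)⁻¹ • η ^ n)) (exp η - 1) := by
    have := (hasSum_nat_add_iff' 1).mpr (exp_series_hasSum_exp' (𝕂 := ℝ) η)
    simpa [pow_succ', mul_smul_comm] using this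
  exact (LinearMap.range _).closed_of_finiteDimensional.mem_of_tendsto hsum
    (Eventually.of_forall fun s => Submodule.sum_mem _ fun n _ => ⟨_, rfl⟩)

theorem exp_sub_one_mem_span_lieAlgebraOf_mul {η : 𝔸} (hη : η ∈ lieAlgebraOf H) :
    exp η - 1 ∈ Submodule.span ℝ (lieAlgebraOf H * Set.univ) := by
  obtain ⟨c, hc⟩ := exp_sub_one_mem_range_mulLeft η
  exact Submodule.subset_span ⟨η, hη, c, trivial, hc⟩

theorem sub_one_mem_span_lieAlgebraOf_mul (hH : IsClosed (H : Set 𝔸))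
    (hconn : IsPreconnected (H : Set 𝔸)) (hinv : ∀ a ∈ H, ∃ b ∈ H, a * b = 1 ∧ b * a = 1)
    {a : 𝔸} (ha : a ∈ H) :
    a - 1 ∈ Submodule.span ℝ (lieAlgebraOf H * Set.univ) := by
  set K := Submodule.span ℝ (lieAlgebraOf H * Set.univ)
  have := isPreconnected_iff_preconnectedSpace.mp hconn
  have hclopen : IsClopen {g : H | (g : 𝔸) - 1 ∈ K} := by
    refine ⟨K.closed_of_finiteDimensional.preimage (by fun_prop), isOpen_iff_mem_nhds.mpr ?_⟩
    intro g hg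
    obtain ⟨g', hg', hgg', hg'g⟩ := hinv g g.2
    have hlim : Tendsto (fun b : H => g' * b) (𝓝 g) (𝓝 1) := by
      simpa [hg'g] using (continuous_subtype_val.tendsto g).const_mul g'
    filter_upwards [hlim.eventually (eventually_exists_exp_eq hH hinv)] with b hb
    obtain ⟨η, hη, hexp⟩ := hb (H.mul_mem hg' b.2)
    have hb : (b : 𝔸) - 1 = g * (exp η - 1) + (g - 1) := by
      rw [hexp, mul_sub, ← mul_assoc, hgg', one_mul, mul_one]
      abel
    show _ ∈ K
    rw [hb]
    exact K.add_mem (mul_mem_span_lieAlgebraOf_mul hinv g.2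
      (exp_sub_one_mem_span_lieAlgebraOf_mul hη)) hg
  have := hclopen.eq_univ ⟨1, by simp⟩
  exact (Set.ext_iff.mp this ⟨a, ha⟩).mpr trivial

theorem MonoidHom.sub_one_mem_span_lieAlgebraOf_mrange_mul {G : Type*} [Group G]
    [TopologicalSpace G] [CompactSpace G] [ConnectedSpace G] {f : G →* 𝔸} (hf : Continuous f)
    (g : G) : f g - 1 ∈ Submodule.span ℝ (lieAlgebraOf (MonoidHom.mrange f) * Set.univ) := by
  refine sub_one_mem_span_lieAlgebraOf_mul ?_ ?_ ?_ ⟨g, rfl⟩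
  · rw [MonoidHom.coe_mrange]
    exact (isCompact_range hf).isClosed
  · rw [MonoidHom.coe_mrange]
    exact isPreconnected_range hf
  · rintro _ ⟨g, rfl⟩
    exact ⟨f g⁻¹, ⟨g⁻¹, rfl⟩, by rw [← map_mul, mul_inv_cancel, map_one],
      by rw [← map_mul, inv_mul_cancel, map_one]⟩

end ClosedSubmonoid

open scoped Matrix

theorem horizontal_form_kills_difference_of_velocities_general
    (N k : ℕ) (G : Type*) [Group G] [TopologicalSpace G]
    [CompactSpace G] [ConnectedSpace G]
    (ρ : G →* Matrix.orthogonalGroup (Fin N) ℝ) (hρ : Continuous ρ)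
    (γ₁ γ₂ : ℝ → EuclideanSpace ℝ (Fin N))
    (hγ₁ : ContDiff ℝ (⊤ : ℕ∞) γ₁) (hγ₂ : ContDiff ℝ (⊤ : ℕ∞) γ₂)
    (hrel : ∀ t : ℝ, ∃ g : G,
      Matrix.toEuclideanLin (ρ g : Matrix (Fin N) (Fin N) ℝ) (γ₁ t) = γ₂ t)
    (α : EuclideanSpace ℝ (Fin N) →
      (EuclideanSpace ℝ (Fin N) [⋀^Fin k]→ₗ[ℝ] ℝ))
    (hαsmooth : ∀ vs : Fin k → EuclideanSpace ℝ (Fin N),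
      Continuous (fun x => α x vs))
    (hαhor : ∀ η : Matrix (Fin N) (Fin N) ℝ,
      (∀ t : ℝ, ∃ h : G, (ρ h : Matrix (Fin N) (Fin N) ℝ) = NormedSpace.exp (t • η)) →
      ∀ (x : EuclideanSpace ℝ (Fin N)) (vs : Fin k → EuclideanSpace ℝ (Fin N)) (i : Fin k),
        vs i = Matrix.toEuclideanLin η x → α x vs = 0) :
    ∀ (vs : Fin k → EuclideanSpace ℝ (Fin N)) (i : Fin k),
      vs i = deriv γ₂ 0 - deriv γ₁ 0 → α 0 vs = 0 := by
  intro vs i hvs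
  let _ : NormedRing (Matrix (Fin N) (Fin N) ℝ) := Matrix.linftyOpNormedRing
  let _ : NormedAlgebra ℝ (Matrix (Fin N) (Fin N) ℝ) := Matrix.linftyOpNormedAlgebra
  let ρ' := (Matrix.orthogonalGroup (Fin N) ℝ).subtype.comp ρ
  let Z := LinearMap.ker ((α 0).toMultilinearMap.toLinearMap vs i)
  have hZ : ∀ g x, Matrix.toEuclideanLin (ρ' g - 1) x ∈ Z := fun g x => by
    let ev : Matrix (Fin N) (Fin N) ℝ →ₗ[ℝ] EuclideanSpace ℝ (Fin N) :=
      (LinearMap.applyₗ x).comp Matrix.toEuclideanLin.toLinearMap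
    refine (Submodule.span_le (p := Z.comap ev)).mpr ?_
      (ρ'.sub_one_mem_span_lieAlgebraOf_mrange_mul (continuous_subtype_val.comp hρ) g)
    rintro _ ⟨η, hη, c, -, rfl⟩
    simpa [ev, Z, Matrix.toLpLin_apply, Matrix.mulVec_mulVec] using
      apply_zero_update_eq_zero_of_vanishing_along hαsmooth (hαhor η hη) vs i
        (Matrix.toEuclideanLin c x)
  have hdiff : ∀ t, (γ₂ - γ₁) t ∈ Z := fun t => by
    obtain ⟨g, hg⟩ := hrel t
    simpa [ρ', ← hg, Matrix.toLpLin_apply, Matrix.sub_mulVec] using hZ g (γ₁ t)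
  have hξ := ((hγ₂.differentiable (by simp) 0).hasDerivAt.sub
    (hγ₁.differentiable (by simp) 0).hasDerivAt).mem_of_forall_mem
    Z.closed_of_finiteDimensional hdiff
  simpa [Z, ← hvs] using hξ

/-- Let `G` be a compact connected Lie group acting orthogonally and
linearly on `V = ℝᴺ` via a continuous representation `ρ`.  Let `γ₁, γ₂ : ℝ → V` be
smooth curves with `γ₁ 0 = γ₂ 0 = 0` such that for every `t` there is `g_t ∈ G` (not
necessarily depending continuously on `t`) with `γ₂ t = g_t · γ₁ t`.  Let
`ξ₁ = γ₁' 0`, `ξ₂ = γ₂' 0`.  Then for every smooth differential `k`-form `α` on `V`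
that is horizontal (i.e. vanishes whenever one of its arguments equals `η · x` at the
point `x`, for `η` in the Lie algebra of `G` — encoded as those matrices `η` whose
one-parameter group `exp (t • η)` stays in the image of `ρ`), the contraction
`(ξ₂ − ξ₁) ⌟ α` vanishes at the origin. -/
theorem horizontal_form_kills_difference_of_velocities
    (N k : ℕ) (G : Type*) [Group G] [TopologicalSpace G] [IsTopologicalGroup G]
    [CompactSpace G] [ConnectedSpace G]
    (ρ : G →* Matrix.orthogonalGroup (Fin N) ℝ) (hρ : Continuous ρ)
    (γ₁ γ₂ : ℝ → EuclideanSpace ℝ (Fin N))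
    (hγ₁ : ContDiff ℝ (⊤ : ℕ∞) γ₁) (hγ₂ : ContDiff ℝ (⊤ : ℕ∞) γ₂)
    (h0₁ : γ₁ 0 = 0) (h0₂ : γ₂ 0 = 0)
    (hrel : ∀ t : ℝ, ∃ g : G,
      Matrix.toEuclideanLin (ρ g : Matrix (Fin N) (Fin N) ℝ) (γ₁ t) = γ₂ t)
    (α : EuclideanSpace ℝ (Fin N) →
      (EuclideanSpace ℝ (Fin N) [⋀^Fin k]→ₗ[ℝ] ℝ))
    (hαsmooth : ∀ vs : Fin k → EuclideanSpace ℝ (Fin N),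
      Continuous (fun x => α x vs))
    (hαhor : ∀ η : Matrix (Fin N) (Fin N) ℝ,
      (∀ t : ℝ, ∃ h : G, (ρ h : Matrix (Fin N) (Fin N) ℝ) = NormedSpace.exp (t • η)) →
      ∀ (x : EuclideanSpace ℝ (Fin N)) (vs : Fin k → EuclideanSpace ℝ (Fin N)) (i : Fin k),
        vs i = Matrix.toEuclideanLin η x → α x vs = 0) :
    ∀ (vs : Fin k → EuclideanSpace ℝ (Fin N)) (i : Fin k),
      vs i = deriv γ₂ 0 - deriv γ₁ 0 → α 0 vs = 0 :=
  horizontal_form_kills_difference_of_velocities_general N k G ρ hρ γ₁ γ₂ hγ₁ hγ₂ hrel α hαsmooth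
    hαhor
end
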